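/- arXiv:1611.10037 — 4 statements merged into one kernel-verified Lean document; each statement's English description precedes it below -/
import Mathlib

section
/- Let p be a monic polynomial of degree N ≥ 2 with all roots real, and let e_k denote the k-th elementary symmetric polynomial. Then for every 0 ≤ k ≤ N−1, the k-th elementary symmetric function of the N−1 roots (with multiplicity) of the derivative polynomial p'/N (normalized to be monic) equals (1 − k/N) times the k-th elementary symmetric function of the N roots of p. -/
open Polynomial

/-- For a monic real polynomial `p` of degree `N ≥ 2` with all roots real, the `k`-th
elementary symmetric function of the (real) roots with multiplicity of the derivative `p'`
equals `(1 - k/N)` times the `k`-th elementary symmetric function of the roots of `p`,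
for `0 ≤ k ≤ N - 1`. -/
theorem esymm_roots_derivative (N : ℕ) (hN : 2 ≤ N) (p : Polynomial ℝ)
    (hmonic : p.Monic) (hdeg : p.natDegree = N) (hroots : p.roots.card = N)
    (k : ℕ) (hk : k ≤ N - 1) :
    ((Polynomial.derivative p).roots.esymm k)
      = (1 - (k : ℝ) / (N : ℝ)) * (p.roots.esymm k) := by
  have hNpos : 0 < N := by omega
  have hcoefftop : (derivative p).coeff (N - 1) = (N : ℝ) := by
    rw [Polynomial.coeff_derivative]
    have e : N - 1 + 1 = N := by omega
    rw [e]
    have : p.coeff N = 1 := by rw [← hdeg]; exact hmonic.coeff_natDegree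
    rw [this, one_mul, show (N:ℕ) - 1 = N - 1 from rfl,
      show ((N - 1 : ℕ) : ℝ) = (N : ℝ) - 1 from by
        push_cast [Nat.cast_sub (by omega : 1 ≤ N)]; ring]
    ring
  have hd' : (derivative p).natDegree = N - 1 := by
    refine le_antisymm ?_ ?_
    · have := p.natDegree_derivative_le
      omega
    · exact Polynomial.le_natDegree_of_ne_zero (by rw [hcoefftop]; positivity)
  have hd'le : (derivative p).roots.card ≤ N - 1 := by
    have h := (derivative p).card_roots'
    omega
  have hd'ge : N - 1 ≤ (derivative p).roots.card := by
    have := p.card_roots_le_derivative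
    omega
  have hcard' : (derivative p).roots.card = (derivative p).natDegree := by omega
  -- Vieta for p'
  have hk' : N - 1 - k ≤ (derivative p).natDegree := by omega
  have h1 := Polynomial.coeff_eq_esymm_roots_of_card hcard' hk'
  rw [hd'] at h1
  have hsub : N - 1 - (N - 1 - k) = k := by omega
  rw [hsub] at h1
  -- Vieta for p
  have hcard : p.roots.card = p.natDegree := by omega
  have hkle : N - k ≤ p.natDegree := by omega
  have h2 := Polynomial.coeff_eq_esymm_roots_of_card hcard hkle
  rw [hdeg] at h2
  have hsub2 : N - (N - k) = k := by omega
  rw [hsub2] at h2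
  rw [hmonic.leadingCoeff] at h2
  -- relate coefficients
  have hco : (derivative p).coeff (N - 1 - k) = p.coeff (N - k) * ((N : ℝ) - k) := by
    rw [Polynomial.coeff_derivative]
    have e : N - 1 - k + 1 = N - k := by omega
    rw [e]
    congr 1
    rw [show N - 1 - k = N - (k + 1) from by omega, Nat.cast_sub (by omega : k + 1 ≤ N)]
    push_cast
    ring
  -- leading coeff of p'
  have hlc : (derivative p).leadingCoeff = (N : ℝ) := by
    rw [Polynomial.leadingCoeff, hd', hcoefftop]
  rw [hlc, hco, h2] at h1
  have hNne : (N : ℝ) ≠ 0 := by positivity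
  have hpow : ((-1 : ℝ)) ^ k ≠ 0 := pow_ne_zero _ (by norm_num)
  have h3 : (-1:ℝ)^k * (p.roots.esymm k * ((N:ℝ) - k))
      = (-1:ℝ)^k * ((N:ℝ) * (derivative p).roots.esymm k) := by linear_combination h1
  have h4 := mul_left_cancel₀ hpow h3
  field_simp
  linear_combination -h4
end

section
/- Let λ_1 ≤ … ≤ λ_N be the real roots of a monic real polynomial p of degree N, and let ε > 0. Suppose exactly k−1 of the roots lie in (−ε, ε), no roots lie in [ε, (1 + 4/(k−1))ε), and p' has at least k roots in (−ε, ε) (counted with multiplicity), where k ≥ 2. Then Σ_{j : λ_j ∉ (−ε, (1+4/(k−1))ε)} 1/(λ_j − ε) ≥ (k−1)/(2ε). -/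
open Polynomial Set

/-! Between two consecutive roots of `p` the logarithmic derivative `p'/p = ∑ 1/(x - λ_j)` is
strictly decreasing, so such a gap contains at most one critical point, and it is simple; a root of
multiplicity `m` is a root of `p'` of multiplicity `m - 1`. Hence on `(a, c]`, with `c` a root,
`p'` has no more roots than `p`. Since `p'` has more roots in `(-ε, ε)` than `p`, it has a root `μ`
beyond the last root of `p` in `(-ε, ε)`. No root lies in `[μ, ε]`, so
`∑ 1/(ε - λ_j) < ∑ 1/(μ - λ_j) = 0`, i.e. `∑ 1/(λ_j - ε) > 0`, while each of the `k - 1` roots in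
`(-ε, ε)` contributes at most `-1/(2ε)`. -/

theorem Multiset.card_filter_mem_of_union_eq {α : Type*} (s : Multiset α) {S T U : Set α}
    [DecidablePred (· ∈ S)] [DecidablePred (· ∈ T)] [DecidablePred (· ∈ U)]
    (hU : S ∪ T = U) (hST : Disjoint S T) :
    card (s.filter (· ∈ U)) = card (s.filter (· ∈ S)) + card (s.filter (· ∈ T)) := by
  have hdisj : s.filter (fun x => x ∈ S ∧ x ∈ T) = 0 :=
    filter_eq_nil.2 fun x _ hx => hST.notMem_of_mem_left hx.1 hx.2
  rw [← card_add, filter_add_filter, hdisj, Multiset.add_zero]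
  exact congrArg card (filter_congr fun x _ => by rw [← hU]; rfl)

theorem exists_forall_notMem_Ioo_of_exists_mem {ι : Type*} [Finite ι] (lam : ι → ℝ) {a b : ℝ}
    (h : ∃ j, lam j ∈ Ioo a b) : ∃ i, lam i ∈ Ioo a b ∧ ∀ j, lam j ∉ Ioo (lam i) b := by
  obtain ⟨i, hi, himax⟩ := (Set.toFinite {j | lam j ∈ Ioo a b}).exists_maximalFor lam _ h
  exact ⟨i, hi, fun j hj => hj.1.not_ge (himax ⟨hi.1.trans hj.1, hj.2⟩ hj.1.le)⟩

theorem sum_one_div_sub_le_of_forall_mem_Ioo {ι : Type*} (s : Finset ι) (lam : ι → ℝ)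
    {ε : ℝ} (h : ∀ j ∈ s, lam j ∈ Ioo (-ε) ε) :
    ∑ j ∈ s, 1 / (lam j - ε) ≤ -(s.card / (2 * ε)) := by
  have hterm : ∀ j ∈ s, 1 / (lam j - ε) ≤ -(1 / (2 * ε)) := fun j hj => by
    rw [← one_div_neg_eq_neg_one_div]
    exact one_div_le_one_div_of_neg_of_le (by linarith [(h j hj).2]) (by linarith [(h j hj).1])
  calc ∑ j ∈ s, 1 / (lam j - ε) ≤ ∑ j ∈ s, -(1 / (2 * ε)) := Finset.sum_le_sum hterm
    _ = -(s.card / (2 * ε)) := by rw [Finset.sum_const, nsmul_eq_mul]; ring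

section

variable {ι : Type*} [Fintype ι] (lam : ι → ℝ)

theorem sum_inv_sub_lt_sum_inv_sub [Nonempty ι] {a b : ℝ} (hab : a < b)
    (h : ∀ j, lam j ∉ Icc a b) :
    ∑ j, (b - lam j)⁻¹ < ∑ j, (a - lam j)⁻¹ := by
  refine Finset.sum_lt_sum_of_nonempty Finset.univ_nonempty fun j _ => ?_
  rcases lt_or_gt_of_ne (fun he : lam j = a => h j ⟨he.ge, he ▸ hab.le⟩) with hj | hj
  · exact inv_strictAntiOn (sub_pos.2 hj) (sub_pos.2 (hj.trans hab)) (by linarith)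
  · have hjb : b < lam j := lt_of_not_ge fun hjb => h j ⟨hj.le, hjb⟩
    exact (inv_lt_inv_of_neg (by linarith) (by linarith)).2 (by linarith)

theorem hasDerivAt_sum_inv_sub {x : ℝ} (hx : ∀ j, lam j ≠ x) :
    HasDerivAt (fun y => ∑ j, (y - lam j)⁻¹) (-∑ j, ((x - lam j) ^ 2)⁻¹) x := by
  rw [← Finset.sum_neg_distrib]
  refine HasDerivAt.fun_sum fun j _ => ?_
  simpa [neg_div] using ((hasDerivAt_id x).sub_const (lam j)).fun_inv (sub_ne_zero.2 (hx j).symm)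

end

namespace Polynomial

variable {ι : Type*} [Fintype ι] (lam : ι → ℝ) {p : ℝ[X]}

theorem roots_eq_map_of_eq_prod (hp : p = ∏ j, (X - C (lam j))) :
    p.roots = Finset.univ.val.map lam := by
  rw [hp, Finset.prod_eq_multiset_prod, ← roots_multiset_prod_X_sub_C (Finset.univ.val.map lam),
    Multiset.map_map]
  rfl

theorem monic_of_eq_prod (hp : p = ∏ j, (X - C (lam j))) : p.Monic :=
  hp ▸ monic_prod_of_monic _ _ fun j _ => monic_X_sub_C (lam j)

theorem card_roots_filter_eq (hp : p = ∏ j, (X - C (lam j))) (q : ℝ → Prop) [DecidablePred q] :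
    Multiset.card (p.roots.filter q) = (Finset.univ.filter fun j => q (lam j)).card := by
  rw [roots_eq_map_of_eq_prod lam hp, Multiset.filter_map, Multiset.card_map]
  rfl

theorem isRoot_iff_exists_eq (hp : p = ∏ j, (X - C (lam j))) {x : ℝ} :
    p.IsRoot x ↔ ∃ j, lam j = x := by
  rw [← mem_roots (monic_of_eq_prod lam hp).ne_zero,
    roots_eq_map_of_eq_prod lam hp]
  simp

theorem eval_derivative_eq_eval_mul_sum_inv (hp : p = ∏ j, (X - C (lam j))) {x : ℝ}
    (hx : ∀ j, lam j ≠ x) :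
    (derivative p).eval x = p.eval x * ∑ j, (x - lam j)⁻¹ := by
  classical
  simp only [hp, derivative_prod_finset, derivative_X_sub_C, mul_one, eval_finsetSum, eval_prod,
    eval_sub, eval_X, eval_C, Finset.mul_sum]
  refine Finset.sum_congr rfl fun i _ => ?_
  rw [← Finset.prod_erase_mul _ _ (Finset.mem_univ i), mul_inv_cancel_right₀
    (sub_ne_zero.2 (hx i).symm)]

theorem isRoot_derivative_iff_sum_inv_eq_zero (hp : p = ∏ j, (X - C (lam j))) {x : ℝ}
    (hx : ∀ j, lam j ≠ x) :
    (derivative p).IsRoot x ↔ ∑ j, (x - lam j)⁻¹ = 0 := by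
  have hpx : p.eval x ≠ 0 := fun h => by
    obtain ⟨j, hj⟩ := (isRoot_iff_exists_eq lam hp).1 h
    exact hx j hj
  rw [IsRoot, eval_derivative_eq_eval_mul_sum_inv lam hp hx, mul_eq_zero, or_iff_right hpx]

/- Differentiating `p' = p * ∑ (y - lam j)⁻¹` at `x`, where the sum vanishes, leaves
`p'' x = p x * -∑ ((x - lam j) ^ 2)⁻¹`. -/
theorem eval_derivative_derivative_ne_zero [Nonempty ι] (hp : p = ∏ j, (X - C (lam j))) {x : ℝ}
    (hx : ∀ j, lam j ≠ x) (hx' : (derivative p).IsRoot x) :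
    (derivative (derivative p)).eval x ≠ 0 := by
  have hlocal : (fun y => (derivative p).eval y) =ᶠ[nhds x]
      fun y => p.eval y * ∑ j, (y - lam j)⁻¹ := by
    filter_upwards [Filter.eventually_all.2 fun j => eventually_ne_nhds (hx j).symm] with y hy
    exact eval_derivative_eq_eval_mul_sum_inv lam hp fun j => (hy j).symm
  have hderiv := ((p.hasDerivAt x).mul (hasDerivAt_sum_inv_sub lam hx)).congr_of_eventuallyEq
    hlocal
  rw [(isRoot_derivative_iff_sum_inv_eq_zero lam hp hx).1 hx', mul_zero, zero_add] at hderiv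
  rw [((derivative p).hasDerivAt x).unique hderiv]
  refine mul_ne_zero (fun h => ?_) (neg_ne_zero.2 (Finset.sum_pos (fun j _ => ?_)
    Finset.univ_nonempty).ne')
  · obtain ⟨j, hj⟩ := (isRoot_iff_exists_eq lam hp).1 h
    exact hx j hj
  · exact inv_pos.2 (by have := sub_ne_zero.2 (hx j).symm; positivity)

theorem rootMultiplicity_derivative_le_one [Nonempty ι] (hp : p = ∏ j, (X - C (lam j))) {x : ℝ}
    (hx : ∀ j, lam j ≠ x) : (derivative p).rootMultiplicity x ≤ 1 := by
  by_cases hp' : derivative p = 0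
  · simp [hp']
  by_contra! h
  obtain ⟨hx', hx''⟩ := (one_lt_rootMultiplicity_iff_isRoot hp').1 h
  exact eval_derivative_derivative_ne_zero lam hp hx hx' hx''

theorem card_roots_derivative_filter_le_one [Nonempty ι] (hp : p = ∏ j, (X - C (lam j)))
    {S : Set ℝ} [DecidablePred (· ∈ S)] (hS : S.OrdConnected) (h : ∀ j, lam j ∉ S) :
    Multiset.card ((derivative p).roots.filter (· ∈ S)) ≤ 1 := by
  have hnodup : ((derivative p).roots.filter (· ∈ S)).Nodup := by
    refine Multiset.nodup_iff_count_le_one.2 fun x => ?_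
    rw [Multiset.count_filter, count_roots]
    split_ifs with hx
    · exact rootMultiplicity_derivative_le_one lam hp fun j hj => h j (hj ▸ hx)
    · exact zero_le_one
  rw [← Multiset.toFinset_card_of_nodup hnodup, Finset.card_le_one]
  intro x hx y hy
  simp only [Multiset.mem_toFinset, Multiset.mem_filter] at hx hy
  have key : ∀ {x y}, x ∈ (derivative p).roots ∧ x ∈ S → y ∈ (derivative p).roots ∧ y ∈ S →
      ¬ x < y := by
    intro x y hx hy hxy
    have hfree : ∀ j, lam j ∉ Icc x y := fun j hj => h j (hS.out hx.2 hy.2 hj)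
    have hx0 := (isRoot_derivative_iff_sum_inv_eq_zero lam hp fun j hj => h j (hj ▸ hx.2)).1
      (isRoot_of_mem_roots hx.1)
    have hy0 := (isRoot_derivative_iff_sum_inv_eq_zero lam hp fun j hj => h j (hj ▸ hy.2)).1
      (isRoot_of_mem_roots hy.1)
    exact (sum_inv_sub_lt_sum_inv_sub lam hxy hfree).ne (hy0.trans hx0.symm)
  exact le_antisymm (not_lt.1 (key hy hx)) (not_lt.1 (key hx hy))

theorem card_roots_derivative_filter_Ioc_le_of_forall_notMem_Ioo [Nonempty ι]
    (hp : p = ∏ j, (X - C (lam j))) {c b : ℝ} (hcb : c < b) (hb : p.IsRoot b)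
    (h : ∀ j, lam j ∉ Ioo c b) :
    Multiset.card ((derivative p).roots.filter (· ∈ Ioc c b))
      ≤ Multiset.card (p.roots.filter (· ∈ Ioc c b)) := by
  classical
  have hsplit : ∀ q : ℝ[X], Multiset.card (q.roots.filter (· ∈ Ioc c b))
      = Multiset.card (q.roots.filter (· ∈ Ioo c b)) + q.rootMultiplicity b := by
    intro q
    rw [Multiset.card_filter_mem_of_union_eq _ (Ioo_union_right hcb) (by simp), ← count_roots,
      Multiset.count_eq_card_filter_eq]
    exact congrArg (_ + Multiset.card ·) (Multiset.filter_congr fun x _ => eq_comm)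
  have hp0 : Multiset.card (p.roots.filter (· ∈ Ioo c b)) = 0 := by
    rw [card_roots_filter_eq lam hp, Finset.card_eq_zero, Finset.filter_eq_empty_iff]
    exact fun j _ => h j
  have hmult := (rootMultiplicity_pos (monic_of_eq_prod lam hp).ne_zero).2 hb
  rw [hsplit, hsplit, hp0, derivative_rootMultiplicity_of_root hb]
  have := card_roots_derivative_filter_le_one lam hp ordConnected_Ioo h
  omega

theorem card_roots_derivative_filter_Ioc_le [Nonempty ι] (hp : p = ∏ j, (X - C (lam j)))
    (a : ℝ) {b : ℝ} (hb : p.IsRoot b) :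
    Multiset.card ((derivative p).roots.filter (· ∈ Ioc a b))
      ≤ Multiset.card (p.roots.filter (· ∈ Ioc a b)) := by
  induction hn : Multiset.card (p.roots.filter (· ∈ Ioc a b)) using Nat.strong_induction_on
    generalizing b with
  | _ n ih =>
  subst hn
  rcases le_or_gt b a with hba | hab
  · simp [Ioc_eq_empty_of_le hba]
  by_cases hinner : ∃ j, lam j ∈ Ioo a b
  swap
  · exact card_roots_derivative_filter_Ioc_le_of_forall_notMem_Ioo lam hp hab hb
      (not_exists.1 hinner)
  -- cut `(a, b]` at the last root of `p` in `(a, b)`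
  obtain ⟨i, hi, hfree⟩ := exists_forall_notMem_Ioo_of_exists_mem lam hinner
  have hsplit : ∀ q : ℝ[X], Multiset.card (q.roots.filter (· ∈ Ioc a b))
      = Multiset.card (q.roots.filter (· ∈ Ioc a (lam i)))
        + Multiset.card (q.roots.filter (· ∈ Ioc (lam i) b)) := fun q =>
    Multiset.card_filter_mem_of_union_eq _ (Ioc_union_Ioc_eq_Ioc hi.1.le hi.2.le)
      (Ioc_disjoint_Ioc_of_le le_rfl)
  have hlast : 0 < Multiset.card (p.roots.filter (· ∈ Ioc (lam i) b)) :=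
    Multiset.card_pos_iff_exists_mem.2 ⟨b, Multiset.mem_filter.2
      ⟨(mem_roots (monic_of_eq_prod lam hp).ne_zero).2 hb, hi.2, le_rfl⟩⟩
  rw [hsplit, hsplit]
  exact add_le_add
    (ih _ (by rw [hsplit p]; omega) ((isRoot_iff_exists_eq lam hp).2 ⟨i, rfl⟩) rfl)
    (card_roots_derivative_filter_Ioc_le_of_forall_notMem_Ioo lam hp hi.2 hb hfree)

theorem exists_isRoot_derivative_forall_notMem_Ico [Nonempty ι] (hp : p = ∏ j, (X - C (lam j)))
    {a b : ℝ} (h : Multiset.card (p.roots.filter (· ∈ Ioo a b))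
      < Multiset.card ((derivative p).roots.filter (· ∈ Ioo a b))) :
    ∃ μ ∈ Ioo a b, (derivative p).IsRoot μ ∧ ∀ j, lam j ∉ Ico μ b := by
  have hab : a < b := by
    by_contra! hba
    simp [Ioo_eq_empty_of_le hba] at h
  obtain ⟨c, hac, hcb, hfree, hcount⟩ : ∃ c, a ≤ c ∧ c < b ∧ (∀ j, lam j ∉ Ioo c b) ∧
      Multiset.card ((derivative p).roots.filter (· ∈ Ioc a c))
        ≤ Multiset.card (p.roots.filter (· ∈ Ioo a b)) := by
    by_cases hinner : ∃ j, lam j ∈ Ioo a b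
    · obtain ⟨i, hi, hfree⟩ := exists_forall_notMem_Ioo_of_exists_mem lam hinner
      refine ⟨lam i, hi.1.le, hi.2, hfree, ?_⟩
      refine (card_roots_derivative_filter_Ioc_le lam hp a
        ((isRoot_iff_exists_eq lam hp).2 ⟨i, rfl⟩)).trans (Multiset.card_le_card ?_)
      exact Multiset.monotone_filter_right _ fun x hx => ⟨hx.1, hx.2.trans_lt hi.2⟩
    · refine ⟨a, le_rfl, hab, not_exists.1 hinner, ?_⟩
      simp
  have hsplit := Multiset.card_filter_mem_of_union_eq (derivative p).roots
    (Ioc_union_Ioo_eq_Ioo hac hcb) (Ioc_disjoint_Ioi_same.mono_right Ioo_subset_Ioi_self)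
  obtain ⟨μ, hμ⟩ := Multiset.card_pos_iff_exists_mem.1 (by omega :
    0 < Multiset.card ((derivative p).roots.filter (· ∈ Ioo c b)))
  obtain ⟨hμroot, hμ⟩ := Multiset.mem_filter.1 hμ
  exact ⟨μ, ⟨hac.trans_lt hμ.1, hμ.2⟩, isRoot_of_mem_roots hμroot,
    fun j hj => hfree j ⟨hμ.1.trans_le hj.1, hj.2⟩⟩

theorem sum_one_div_sub_pos [Nonempty ι] (hp : p = ∏ j, (X - C (lam j))) {μ b : ℝ}
    (hμ : (derivative p).IsRoot μ) (hμb : μ < b) (h : ∀ j, lam j ∉ Icc μ b) :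
    0 < ∑ j, 1 / (lam j - b) := by
  have hμ0 := (isRoot_derivative_iff_sum_inv_eq_zero lam hp
    fun j hj => h j ⟨hj.ge, hj ▸ hμb.le⟩).1 hμ
  have hlt := sum_inv_sub_lt_sum_inv_sub lam hμb h
  have hneg : ∑ j, 1 / (lam j - b) = -∑ j, (b - lam j)⁻¹ := by
    rw [← Finset.sum_neg_distrib]
    exact Finset.sum_congr rfl fun j _ => by rw [one_div, ← inv_neg, neg_sub]
  linarith

end Polynomial

/-- Key inequality in the repulsion argument: if a monic real-rooted polynomial
`p = ∏ (X - λ j)` has exactly `k - 1` roots in `(-ε, ε)`, no roots in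
`[ε, (1 + 4/(k-1))ε)`, and `p'` has at least `k` roots (with multiplicity) in
`(-ε, ε)`, then the roots outside `(-ε, (1 + 4/(k-1))ε)` satisfy
`Σ 1/(λ j - ε) ≥ (k-1)/(2ε)`. -/
theorem far_roots_sum_lower_bound (N k : ℕ) (hk : 2 ≤ k) (ε : ℝ) (hε : 0 < ε)
    (lam : Fin N → ℝ)
    (p : Polynomial ℝ) (hp : p = ∏ j : Fin N, (X - C (lam j)))
    (hwindow : (Finset.univ.filter (fun j => -ε < lam j ∧ lam j < ε)).card = k - 1)
    (hgap : ∀ j : Fin N, ¬ (ε ≤ lam j ∧ lam j < (1 + 4 / ((k : ℝ) - 1)) * ε))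
    (hcrit : k ≤ ((Polynomial.derivative p).roots.filter
        (fun x => -ε < x ∧ x < ε)).card) :
    ((k : ℝ) - 1) / (2 * ε)
      ≤ ∑ j ∈ Finset.univ.filter
          (fun j => ¬ (-ε < lam j ∧ lam j < (1 + 4 / ((k : ℝ) - 1)) * ε)),
          1 / (lam j - ε) := by
  have hε_lt : ε < (1 + 4 / ((k : ℝ) - 1)) * ε := by
    have hk' : (1 : ℝ) < k := by exact_mod_cast hk
    exact lt_mul_of_one_lt_left hε (lt_add_of_pos_right 1 (div_pos four_pos (sub_pos.2 hk')))
  obtain ⟨j₀, -⟩ := Finset.card_pos.1 (by omega :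
    0 < (Finset.univ.filter fun j => -ε < lam j ∧ lam j < ε).card)
  have : Nonempty (Fin N) := ⟨j₀⟩
  have hcrit' : k ≤ Multiset.card ((derivative p).roots.filter (· ∈ Set.Ioo (-ε) ε)) := hcrit
  obtain ⟨μ, hμ, hμroot, hμfree⟩ := exists_isRoot_derivative_forall_notMem_Ico lam hp
    (a := -ε) (b := ε) (by rw [card_roots_filter_eq lam hp]; exact hwindow.trans_lt (by omega))
  have hpos := sum_one_div_sub_pos lam hp hμroot hμ.2 fun j hj =>
    (hj.2.lt_or_eq).elim (fun h => hμfree j ⟨hj.1, h⟩) fun h => hgap j ⟨h.ge, h ▸ hε_lt⟩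
  have hnear := sum_one_div_sub_le_of_forall_mem_Ioo
    (Finset.univ.filter fun j => -ε < lam j ∧ lam j < ε) lam
    fun j hj => (Finset.mem_filter.1 hj).2
  have hfar : (Finset.univ.filter fun j => ¬ (-ε < lam j ∧ lam j < (1 + 4 / ((k : ℝ) - 1)) * ε))
      = Finset.univ.filter fun j => ¬ (-ε < lam j ∧ lam j < ε) :=
    Finset.filter_congr fun j _ => not_congr
      ⟨fun h => ⟨h.1, lt_of_not_ge fun h' => hgap j ⟨h', h.2⟩⟩, fun h => ⟨h.1, h.2.trans hε_lt⟩⟩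
  rw [hwindow, Nat.cast_sub (by omega), Nat.cast_one] at hnear
  rw [← Finset.sum_filter_add_sum_filter_not Finset.univ
    (fun j => -ε < lam j ∧ lam j < ε)] at hpos
  rw [hfar]
  linarith
end

section
/- Chernoff bound for linear statistics of determinantal processes: let 𝔇 be a determinantal point process with finite-rank self-adjoint kernel K, 0 ≤ K ≤ 1, f a bounded Borel function, and r > 0. Then P(Σ_{x∈𝔇} f(x) ≥ E[Σ_{x∈𝔇} f(x)] + r) ≤ exp(−A*(r)), where A*(r) = sup_{t ≤ ‖f‖_∞^{−1}} (rt − A(t)) and A(t) = (e t²/2)·E[Σ_{x∈𝔇} f(x)²]. -/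
/-!
Markov's inequality applied to `exp (t Σ f)` reduces the claim to the exponential-moment bound
`log E[exp (t Σ f)] ≤ t E[Σ f] + (e t² / 2) E[Σ f²]` for `0 < t ≤ ‖f‖_∞⁻¹`; for `t ≤ 0` the bound
is trivial. The Laplace functional is `det (1 + D K)` with `D = diag (e^{tf} - 1)`, which equals
`det (1 + √K D √K)`. Since `0 ≤ K ≤ 1`, the matrix `1 + √K D √K = (1 - K) + √K e^{tf} √K` is
positive semidefinite, so `det ≤ exp (trace - n)` (i.e. `λ ≤ e^{λ - 1}` for each eigenvalue) gives
`E[exp (t Σ f)] ≤ exp (Σᵢ (e^{t f i} - 1) K i i)`. Finally `e^x - 1 ≤ x + (e/2) x²` on `[-1, 1]`,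
and `K i i` is the probability that `i` belongs to the process, so `Σᵢ g i K i i = E[Σ g]`.
-/

open Finset Matrix

theorem Real.exp_le_one_add_add_exp_one_mul_sq {x : ℝ} (hx : |x| ≤ 1) :
    Real.exp x ≤ 1 + x + Real.exp 1 / 2 * x ^ 2 := by
  have hquad := (abs_le.mp (Real.abs_exp_sub_one_sub_id_le hx)).2
  nlinarith [Real.exp_one_gt_two, sq_nonneg x]

theorem abs_mul_le_one_of_le_inv_iSup_abs {ι : Type*} [Finite ι] (f : ι → ℝ) {t : ℝ}
    (ht : 0 ≤ t) (htf : t ≤ (⨆ i, |f i|)⁻¹) (i : ι) : |t * f i| ≤ 1 := by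
  have hfi : |f i| ≤ ⨆ j, |f j| := le_ciSup (f := fun j => |f j|) (Set.finite_range _).bddAbove i
  rcases (abs_nonneg (f i)).trans hfi |>.eq_or_lt with hM | hM
  · rw [← hM, _root_.inv_zero] at htf
    simp [le_antisymm htf ht]
  · rw [abs_mul, abs_of_nonneg ht]
    calc t * |f i| ≤ (⨆ j, |f j|)⁻¹ * ⨆ j, |f j| :=
          mul_le_mul htf hfi (abs_nonneg _) (by positivity)
      _ = 1 := inv_mul_cancel₀ hM.ne'

theorem le_exp_neg_csSup {x : ℝ} {T : Set ℝ} (hx : 0 ≤ x) (hT : T.Nonempty)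
    (h : ∀ y ∈ T, x ≤ Real.exp (-y)) : x ≤ Real.exp (-sSup T) := by
  rcases hx.eq_or_lt with rfl | hx
  · exact (Real.exp_pos _).le
  have hsup : sSup T ≤ -Real.log x := csSup_le hT fun y hy => by
    have := Real.log_le_log hx (h y hy)
    rw [Real.log_exp] at this
    linarith
  calc x = Real.exp (Real.log x) := (Real.exp_log hx).symm
    _ ≤ Real.exp (-sSup T) := Real.exp_le_exp.mpr (by linarith)

theorem sum_filter_le_le_exp_mul_sum_exp {α : Type*} [Fintype α] {μ : α → ℝ}
    (hμ : ∀ x, 0 ≤ μ x) (F : α → ℝ) (a : ℝ) {t : ℝ} (ht : 0 ≤ t) :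
    ∑ x ∈ univ.filter (fun x => a ≤ F x), μ x
      ≤ Real.exp (-(t * a)) * ∑ x, μ x * Real.exp (t * F x) := by
  rw [mul_sum]
  calc ∑ x ∈ univ.filter (fun x => a ≤ F x), μ x
      ≤ ∑ x ∈ univ.filter (fun x => a ≤ F x), Real.exp (-(t * a)) * (μ x * Real.exp (t * F x)) := by
        refine sum_le_sum fun x hx => ?_
        rw [mul_left_comm, ← Real.exp_add]
        have : 0 ≤ -(t * a) + t * F x := by nlinarith [(mem_filter.mp hx).2]
        exact le_mul_of_one_le_right (hμ x) (Real.one_le_exp this)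
    _ ≤ ∑ x, Real.exp (-(t * a)) * (μ x * Real.exp (t * F x)) :=
        sum_le_sum_of_subset_of_nonneg (filter_subset _ _) fun x _ _ => by
          have := hμ x
          positivity

namespace Matrix

variable {ι : Type*} [Fintype ι] [DecidableEq ι]

theorem PosSemidef.det_le_exp_trace_sub_card {P : Matrix ι ι ℝ} (hP : P.PosSemidef) :
    P.det ≤ Real.exp (P.trace - Fintype.card ι) := by
  rw [hP.1.det_eq_prod_eigenvalues, hP.1.trace_eq_sum_eigenvalues]
  simp only [RCLike.ofReal_real_eq_id, id]
  calc ∏ i, hP.1.eigenvalues i ≤ ∏ i, Real.exp (hP.1.eigenvalues i - 1) :=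
        prod_le_prod (fun i _ => hP.eigenvalues_nonneg i) fun i _ => by
          linarith [Real.add_one_le_exp (hP.1.eigenvalues i - 1)]
    _ = Real.exp (∑ i, hP.1.eigenvalues i - Fintype.card ι) := by
        rw [← Real.exp_sum, sum_sub_distrib, sum_const, card_univ, nsmul_one]

theorem det_one_add_diagonal_mul_le_exp {K : Matrix ι ι ℝ} (hK0 : K.PosSemidef)
    (hK1 : (1 - K).PosSemidef) {d : ι → ℝ} (hd : ∀ i, -1 ≤ d i) :
    (1 + diagonal d * K).det ≤ Real.exp (∑ i, d i * K i i) := by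
  open scoped MatrixOrder in
  obtain ⟨B, hBH, hBB⟩ : ∃ B : Matrix ι ι ℝ, B.IsHermitian ∧ B * B = K :=
    ⟨CFC.sqrt K, (nonneg_iff_posSemidef.mp (CFC.sqrt_nonneg K)).1,
      CFC.sqrt_mul_sqrt_self K hK0.nonneg⟩
  have hdet_comm : (1 + diagonal d * K).det = (1 + B * diagonal d * B).det := by
    rw [← hBB, ← Matrix.mul_assoc, det_one_add_mul_comm, ← Matrix.mul_assoc]
  have hPSD : (1 + B * diagonal d * B).PosSemidef := by
    have hdiag : (diagonal (1 + d)).PosSemidef :=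
      posSemidef_diagonal_iff.mpr fun i => by
        simp only [Pi.add_apply, Pi.one_apply]
        linarith [hd i]
    have hconj := hdiag.mul_mul_conjTranspose_same B
    rw [hBH.eq] at hconj
    convert hK1.add hconj using 1
    have hdiag1 : diagonal (1 + d) = 1 + diagonal d := by rw [← diagonal_one, diagonal_add]; rfl
    rw [hdiag1, ← hBB]
    noncomm_ring
  have htrace : (1 + B * diagonal d * B).trace = Fintype.card ι + ∑ i, d i * K i i := by
    rw [trace_add, trace_one, trace_mul_cycle, hBB, trace_mul_comm]
    simp [trace, diagonal_mul]
  calc (1 + diagonal d * K).det = (1 + B * diagonal d * B).det := hdet_comm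
    _ ≤ Real.exp (∑ i, d i * K i i) := by
        simpa [htrace] using hPSD.det_le_exp_trace_sub_card

end Matrix

section Determinantal

variable {ι : Type*} [Fintype ι] [DecidableEq ι]

def IsDeterminantal (μ : Finset ι → ℝ) (K : Matrix ι ι ℝ) : Prop :=
  ∀ g : ι → ℝ, ∑ S : Finset ι, μ S * Real.exp (∑ x ∈ S, g x)
    = ((1 : Matrix ι ι ℝ) + diagonal (fun i => Real.exp (g i) - 1) * K).det

namespace IsDeterminantal

variable {μ : Finset ι → ℝ} {K : Matrix ι ι ℝ}

theorem sum_filter_mem_eq_diag (hdet : IsDeterminantal μ K) (hμ1 : ∑ S, μ S = 1) (i : ι) :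
    ∑ S ∈ univ.filter (fun S : Finset ι => i ∈ S), μ S = K i i := by
  -- With `g = log 2 · 𝟙_{i}` the Laplace functional is `1 + P(i ∈ S)`, and the determinant is
  -- that of a rank-one perturbation of `1`.
  have h := hdet (Pi.single i (Real.log 2) : ι → ℝ)
  have hexp : (fun j => Real.exp ((Pi.single i (Real.log 2) : ι → ℝ) j) - 1) = Pi.single i 1 := by
    ext j
    rcases eq_or_ne j i with rfl | hj
    · norm_num [Real.exp_log two_pos]
    · simp [hj]
  have hrank : diagonal (Pi.single i (1 : ℝ)) * K
      = replicateCol Unit (Pi.single i (1 : ℝ)) * replicateRow Unit (fun j => K i j) := by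
    ext a b
    rw [diagonal_mul]
    simp +contextual [mul_apply, Pi.single_apply]
  rw [hexp, hrank, det_one_add_replicateCol_mul_replicateRow, dotProduct_single, mul_one] at h
  simp only [sum_pi_single', apply_ite Real.exp, Real.exp_log two_pos, Real.exp_zero] at h
  have hsplit : ∀ S : Finset ι,
      μ S * (if i ∈ S then 2 else 1) = μ S + if i ∈ S then μ S else 0 := by
    intro S
    split_ifs <;> ring
  rw [sum_congr rfl fun S _ => hsplit S, sum_add_distrib, hμ1, ← sum_filter] at h
  linarith

theorem sum_mul_sum_eq_sum_mul_diag (hdet : IsDeterminantal μ K) (hμ1 : ∑ S, μ S = 1) (g : ι → ℝ) :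
    ∑ S : Finset ι, μ S * ∑ x ∈ S, g x = ∑ i, g i * K i i := by
  simp only [← hdet.sum_filter_mem_eq_diag hμ1, sum_filter, mul_sum]
  rw [sum_comm]
  refine sum_congr rfl fun S _ => ?_
  simp only [mul_ite, mul_zero, sum_ite_mem, univ_inter]
  exact sum_congr rfl fun _ _ => mul_comm _ _

theorem sum_mul_exp_le (hdet : IsDeterminantal μ K) (hK0 : K.PosSemidef)
    (hK1 : (1 - K).PosSemidef) (g : ι → ℝ) :
    ∑ S : Finset ι, μ S * Real.exp (∑ x ∈ S, g x)
      ≤ Real.exp (∑ i, (Real.exp (g i) - 1) * K i i) := by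
  rw [hdet g]
  exact det_one_add_diagonal_mul_le_exp hK0 hK1 fun i => by linarith [Real.exp_pos (g i)]

theorem sum_mul_exp_le_of_abs_le_one (hdet : IsDeterminantal μ K) (hμ1 : ∑ S, μ S = 1)
    (hK0 : K.PosSemidef) (hK1 : (1 - K).PosSemidef) {g : ι → ℝ} (hg : ∀ i, |g i| ≤ 1) :
    ∑ S : Finset ι, μ S * Real.exp (∑ x ∈ S, g x)
      ≤ Real.exp (∑ S : Finset ι, μ S * ∑ x ∈ S, g x
          + Real.exp 1 / 2 * ∑ S : Finset ι, μ S * ∑ x ∈ S, g x ^ 2) := by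
  refine (hdet.sum_mul_exp_le hK0 hK1 g).trans (Real.exp_le_exp.mpr ?_)
  rw [hdet.sum_mul_sum_eq_sum_mul_diag hμ1, hdet.sum_mul_sum_eq_sum_mul_diag hμ1, mul_sum,
    ← sum_add_distrib]
  refine sum_le_sum fun i _ => ?_
  have hexp := Real.exp_le_one_add_add_exp_one_mul_sq (hg i)
  nlinarith [hK0.diag_nonneg (i := i)]

end IsDeterminantal

end Determinantal

theorem det_process_chernoff_general {ι : Type*} [Fintype ι] [DecidableEq ι]
    (K : Matrix ι ι ℝ) (hK0 : K.PosSemidef)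
    (hK1 : ((1 : Matrix ι ι ℝ) - K).PosSemidef)
    (μ : Finset ι → ℝ) (hμ0 : ∀ S, 0 ≤ μ S) (hμ1 : ∑ S : Finset ι, μ S = 1)
    (hLaplace : ∀ g : ι → ℝ,
      ∑ S : Finset ι, μ S * Real.exp (∑ x ∈ S, g x)
        = ((1 : Matrix ι ι ℝ)
            + Matrix.diagonal (fun i => Real.exp (g i) - 1) * K).det)
    (f : ι → ℝ) (r : ℝ) (hr : 0 < r) :
    ∑ S ∈ Finset.univ.filter
        (fun S : Finset ι =>
          (∑ S' : Finset ι, μ S' * ∑ x ∈ S', f x) + r ≤ ∑ x ∈ S, f x),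
        μ S
      ≤ Real.exp (-(sSup {y : ℝ | ∃ t : ℝ, t ≤ (⨆ i, |f i|)⁻¹ ∧
          y = r * t
            - Real.exp 1 * t ^ 2 / 2
                * (∑ S' : Finset ι, μ S' * ∑ x ∈ S', (f x) ^ 2)})) := by
  set m := ∑ S : Finset ι, μ S * ∑ x ∈ S, f x
  set q := ∑ S : Finset ι, μ S * ∑ x ∈ S, f x ^ 2
  have hq : 0 ≤ q := sum_nonneg fun S _ => mul_nonneg (hμ0 S) (sum_nonneg fun x _ => sq_nonneg _)
  have hP1 : ∑ S ∈ univ.filter (fun S : Finset ι => m + r ≤ ∑ x ∈ S, f x), μ S ≤ 1 :=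
    hμ1 ▸ sum_le_sum_of_subset_of_nonneg (filter_subset _ _) fun S _ _ => hμ0 S
  refine le_exp_neg_csSup (sum_nonneg fun S _ => hμ0 S)
    ⟨0, 0, inv_nonneg.mpr (Real.iSup_nonneg fun i => abs_nonneg _), by ring⟩ ?_
  rintro _ ⟨t, htf, rfl⟩
  rcases le_or_gt t 0 with ht | ht
  · have hA : 0 ≤ Real.exp 1 * t ^ 2 / 2 * q := by positivity
    exact hP1.trans (Real.one_le_exp (by nlinarith))
  have hdet : IsDeterminantal μ K := hLaplace
  have hmgf := hdet.sum_mul_exp_le_of_abs_le_one hμ1 hK0 hK1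
    (abs_mul_le_one_of_le_inv_iSup_abs f ht.le htf)
  simp only [← mul_sum, mul_pow, mul_left_comm (μ _)] at hmgf
  calc _ ≤ Real.exp (-(t * (m + r))) * ∑ S : Finset ι, μ S * Real.exp (t * ∑ x ∈ S, f x) :=
        sum_filter_le_le_exp_mul_sum_exp hμ0 _ _ ht.le
    _ ≤ Real.exp (-(t * (m + r))) * Real.exp (t * m + Real.exp 1 / 2 * (t ^ 2 * q)) :=
        mul_le_mul_of_nonneg_left hmgf (Real.exp_pos _).le
    _ = _ := by rw [← Real.exp_add]; ring_nf

/-- Chernoff bound for linear statistics of a determinantal point process with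
finite-rank self-adjoint kernel `0 ≤ K ≤ 1` (modelled on a finite ground set, the
process being a probability weight on subsets with determinantal Laplace functional):
`P(Σ f ≥ E[Σ f] + r) ≤ exp(-A*(r))` where
`A*(r) = sup_{t ≤ ‖f‖_∞⁻¹} (r t - A(t))` and `A(t) = (e t²/2)·E[Σ f²]`. -/
theorem det_process_chernoff {ι : Type*} [Fintype ι] [DecidableEq ι]
    (K : Matrix ι ι ℝ) (hsym : K.IsSymm) (hK0 : K.PosSemidef)
    (hK1 : ((1 : Matrix ι ι ℝ) - K).PosSemidef)
    (μ : Finset ι → ℝ) (hμ0 : ∀ S, 0 ≤ μ S) (hμ1 : ∑ S : Finset ι, μ S = 1)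
    (hLaplace : ∀ g : ι → ℝ,
      ∑ S : Finset ι, μ S * Real.exp (∑ x ∈ S, g x)
        = ((1 : Matrix ι ι ℝ)
            + Matrix.diagonal (fun i => Real.exp (g i) - 1) * K).det)
    (f : ι → ℝ) (r : ℝ) (hr : 0 < r) :
    ∑ S ∈ Finset.univ.filter
        (fun S : Finset ι =>
          (∑ S' : Finset ι, μ S' * ∑ x ∈ S', f x) + r ≤ ∑ x ∈ S, f x),
        μ S
      ≤ Real.exp (-(sSup {y : ℝ | ∃ t : ℝ, t ≤ (⨆ i, |f i|)⁻¹ ∧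
          y = r * t
            - Real.exp 1 * t ^ 2 / 2
                * (∑ S' : Finset ι, μ S' * ∑ x ∈ S', (f x) ^ 2)})) :=
  det_process_chernoff_general K hK0 hK1 μ hμ0 hμ1 hLaplace f r hr
end

section
/- Let k ≥ 2 and ε > 0, let X = (x_1, …, x_{k+1}) be distinct reals, and suppose all k roots of P_X'(x) = d/dx Π_{j=1}^{k+1}(x − x_j) lie in (−ε, ε). Then min_j x_j > −(2k+1)ε and max_j x_j < (2k+1)ε. -/
open Polynomial Finset

lemma key_aux (k : ℕ) (hk : 2 ≤ k) (ε : ℝ) (hε : 0 < ε)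
    (x : Fin (k + 1) → ℝ) (hinj : Function.Injective x)
    (P : Polynomial ℝ) (hP : P = ∏ j : Fin (k + 1), (X - C (x j)))
    (hcrit : ∀ z : ℝ, (Polynomial.derivative P).IsRoot z → -ε < z ∧ z < ε)
    (j0 j1 : Fin (k + 1)) (hj0 : ∀ j, x j ≤ x j0) (hj1 : ∀ j, x j1 ≤ x j) :
    (k : ℝ) * x j0 + x j1 ≤ ((k : ℝ) + 1) * ε := by
  have hk' : (2 : ℝ) ≤ (k : ℝ) := by exact_mod_cast hk
  set M := x j0 with hM
  set m := x j1 with hm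
  have hroot : ∀ j, P.eval (x j) = 0 := by
    intro j
    rw [hP, eval_prod]
    exact Finset.prod_eq_zero (mem_univ j) (by simp)
  -- every non-maximal x j is < ε (Rolle)
  have hlt : ∀ j, j ≠ j0 → x j < ε := by
    intro j hj
    have hxlt : x j < M := lt_of_le_of_ne (hj0 j) (fun h => hj (hinj h))
    obtain ⟨c, hc, hc'⟩ := exists_deriv_eq_zero (f := fun z => P.eval z) hxlt
      (P.continuous.continuousOn) (by simp [hroot, hM])
    rw [Polynomial.deriv] at hc'
    have := (hcrit c hc').2
    linarith [hc.1]
  by_cases hMε : M ≤ ε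
  · nlinarith [hj0 j1]
  push_neg at hMε
  -- some index other than j0
  obtain ⟨j2, hj2⟩ : ∃ j2 : Fin (k + 1), j2 ≠ j0 := by
    have : Nontrivial (Fin (k + 1)) := Fin.nontrivial_iff_two_le.mpr (by omega)
    exact exists_ne j0
  have hmε : m < ε := lt_of_le_of_lt (hj1 j2) (hlt j2 hj2)
  -- main inequality for any t ∈ (ε, M)
  have hmain : ∀ t : ℝ, ε < t → t < M → (k : ℝ) * M + m < ((k : ℝ) + 1) * t := by
    intro t htε htM
    have htm : 0 < t - m := by linarith
    have htj : ∀ j, j ≠ j0 → 0 < t - x j := fun j hj => by linarith [hlt j hj]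
    have htne : ∀ j, t - x j ≠ 0 := by
      intro j
      by_cases h : j = j0
      · subst h; intro h'; rw [← hM] at h'; linarith [sub_eq_zero.mp h']
      · exact (htj j h).ne'
    have hPt : P.eval t = ∏ j, (t - x j) := by simp [hP, eval_prod]
    -- P(t) < 0
    have hPneg : P.eval t < 0 := by
      rw [hPt, ← Finset.mul_prod_erase univ _ (mem_univ j0)]
      apply mul_neg_of_neg_of_pos
      · rw [← hM]; linarith
      · exact Finset.prod_pos fun j hj => htj j (Finset.mem_erase.mp hj).1
    -- P'(t) > 0
    have hP'pos : 0 < (derivative P).eval t := by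
      have hPm : P.Monic := by
        rw [hP]; exact monic_prod_of_monic _ _ fun j _ => monic_X_sub_C _
      have hPdeg : P.natDegree = k + 1 := by
        rw [hP, natDegree_prod _ _ fun j _ => X_sub_C_ne_zero (x j)]
        simp
      have hcoeff : (derivative P).coeff k = (k : ℝ) + 1 := by
        rw [coeff_derivative]
        have h1 : P.coeff (k + 1) = 1 := by
          have := hPm.coeff_natDegree
          rwa [hPdeg] at this
        rw [h1]; push_cast; ring
      have hdegle : (derivative P).natDegree ≤ k := by
        have h2 := P.natDegree_derivative_le
        rw [hPdeg] at h2; omega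
      have hdeg' : (derivative P).natDegree = k :=
        le_antisymm hdegle (le_natDegree_of_ne_zero (by rw [hcoeff]; positivity))
      have hlead : (derivative P).leadingCoeff = (k : ℝ) + 1 := by
        rw [leadingCoeff, hdeg', hcoeff]
      have hdpos : 0 < (derivative P).degree := by
        rw [degree_eq_natDegree (fun h => by simp [h] at hlead; linarith), hdeg']
        exact_mod_cast Nat.pos_of_ne_zero (by omega)
      have htend := tendsto_atTop_of_leadingCoeff_nonneg (derivative P) hdpos
        (by rw [hlead]; positivity)
      have hne : (derivative P).eval t ≠ 0 := fun h => by
        have := (hcrit t h).2; linarith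
      rcases lt_or_gt_of_ne hne with hneg | hpos
      · exfalso
        obtain ⟨T, hT1, hT2⟩ := ((htend.eventually_ge_atTop 1).and
          (Filter.eventually_ge_atTop (t + 1))).exists
        have hcont : ContinuousOn (fun z => (derivative P).eval z) (Set.Icc t T) :=
          (derivative P).continuous.continuousOn
        have h0 : (0 : ℝ) ∈ Set.Ioo ((derivative P).eval t) ((derivative P).eval T) :=
          ⟨hneg, by linarith⟩
        obtain ⟨c, hc, hc0⟩ := intermediate_value_Ioo (by linarith : t ≤ T) hcont h0
        have := (hcrit c hc0).2
        linarith [hc.1]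
      · exact hpos
    -- log derivative computation
    have hderiv_eq : (derivative P).eval t = ∑ j, ∏ i ∈ univ.erase j, (t - x i) := by
      have h1 : HasDerivAt (fun z => P.eval z)
          (∑ j, (∏ i ∈ univ.erase j, (t - x i)) • (1 : ℝ)) t := by
        have h2 : HasDerivAt (fun z : ℝ => ∏ j : Fin (k + 1), (z - x j))
            (∑ j, (∏ i ∈ univ.erase j, (t - x i)) • (1 : ℝ)) t :=
          HasDerivAt.fun_finsetProd (f := fun (j : Fin (k + 1)) (z : ℝ) => z - x j)
            (f' := fun _ => (1 : ℝ)) fun j _ => (hasDerivAt_id t).sub_const (x j)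
        have heq : (fun z => P.eval z) = (fun z : ℝ => ∏ j : Fin (k + 1), (z - x j)) := by
          funext z
          simp [hP, eval_prod]
        rw [heq]
        exact h2
      have h3 := (P.hasDerivAt t).unique h1
      simpa using h3
    have hterm : ∀ j : Fin (k + 1), ∏ i ∈ univ.erase j, (t - x i)
        = P.eval t * (t - x j)⁻¹ := by
      intro j
      rw [hPt, ← Finset.mul_prod_erase univ _ (mem_univ j), mul_comm (t - x j),
        mul_assoc, mul_inv_cancel₀ (htne j), mul_one]
    have hsum_neg : ∑ j, (t - x j)⁻¹ < 0 := by
      by_contra h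
      push_neg at h
      have : (derivative P).eval t ≤ 0 := by
        rw [hderiv_eq]
        calc ∑ j, ∏ i ∈ univ.erase j, (t - x i) = P.eval t * ∑ j, (t - x j)⁻¹ := by
              rw [Finset.mul_sum]; exact Finset.sum_congr rfl fun j _ => hterm j
          _ ≤ 0 := mul_nonpos_of_nonpos_of_nonneg (le_of_lt hPneg) h
      linarith
    -- split off j0 and bound
    have hsplit : (t - M)⁻¹ + ∑ j ∈ univ.erase j0, (t - x j)⁻¹ = ∑ j, (t - x j)⁻¹ :=
      Finset.add_sum_erase univ (fun j => (t - x j)⁻¹) (mem_univ j0)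
    have hbound : (k : ℝ) * (t - m)⁻¹ ≤ ∑ j ∈ univ.erase j0, (t - x j)⁻¹ := by
      have hcard : (univ.erase j0).card = k := by
        rw [Finset.card_erase_of_mem (mem_univ j0), Finset.card_univ, Fintype.card_fin]
        omega
      calc (k : ℝ) * (t - m)⁻¹ = (univ.erase j0).card • (t - m)⁻¹ := by
            rw [hcard, nsmul_eq_mul]
        _ ≤ ∑ j ∈ univ.erase j0, (t - x j)⁻¹ := by
            apply Finset.card_nsmul_le_sum
            intro j hj
            have hj' := (Finset.mem_erase.mp hj).1
            exact inv_anti₀ (htj j hj') (by linarith [hj1 j])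
    have hMt : 0 < M - t := by linarith
    have hfin : (k : ℝ) * (t - m)⁻¹ < (M - t)⁻¹ := by
      have h1 : (t - M)⁻¹ = -(M - t)⁻¹ := by
        rw [show t - M = -(M - t) by ring, inv_neg]
      nlinarith [hsplit, hbound, hsum_neg]
    rw [← div_eq_mul_inv, show (M - t)⁻¹ = 1 / (M - t) by rw [one_div]] at hfin
    have := (div_lt_div_iff₀ htm hMt).mp hfin
    nlinarith
  -- conclude by choosing t close to ε
  by_contra hcon
  push_neg at hcon
  set t0 := ((k : ℝ) * M + m) / ((k : ℝ) + 1) with ht0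
  have hk1 : (0 : ℝ) < (k : ℝ) + 1 := by linarith
  have h1 : ε < t0 := by
    rw [ht0, lt_div_iff₀ hk1]; linarith
  have h2 : t0 < M := by
    rw [ht0, div_lt_iff₀ hk1]
    have : m < M := lt_trans hmε hMε
    nlinarith
  have h3 := hmain t0 h1 h2
  rw [ht0, mul_div_cancel₀ _ (ne_of_gt hk1)] at h3
  linarith

/-- If all the critical points of `P_X(z) = ∏_{j=1}^{k+1} (z - x j)` (for distinct real
`x j`) lie in `(-ε, ε)`, then all the `x j` satisfy `|x j| < (2k+1)ε`. -/
theorem roots_confined_by_critical_points (k : ℕ) (hk : 2 ≤ k) (ε : ℝ) (hε : 0 < ε)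
    (x : Fin (k + 1) → ℝ) (hinj : Function.Injective x)
    (P : Polynomial ℝ) (hP : P = ∏ j : Fin (k + 1), (X - C (x j)))
    (hcrit : ∀ z : ℝ, (Polynomial.derivative P).IsRoot z → -ε < z ∧ z < ε) :
    ∀ j : Fin (k + 1), |x j| < (2 * (k : ℝ) + 1) * ε := by
  have hk' : (2 : ℝ) ≤ (k : ℝ) := by exact_mod_cast hk
  obtain ⟨j0, hj0⟩ := Finite.exists_max x
  obtain ⟨j1, hj1⟩ := Finite.exists_min x
  -- first application: k * max + min ≤ (k+1) ε
  have hA := key_aux k hk ε hε x hinj P hP hcrit j0 j1 hj0 hj1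
  -- mirrored configuration
  set x' : Fin (k + 1) → ℝ := fun j => -x j with hx'
  have hinj' : Function.Injective x' := fun a b hab => hinj (by simpa [hx'] using hab)
  set Q : Polynomial ℝ := ∏ j : Fin (k + 1), (X - C (x' j)) with hQ
  -- relate evaluations of Q and P
  have hQeval : ∀ z : ℝ, Q.eval z = (-1 : ℝ) ^ (k + 1) * P.eval (-z) := by
    intro z
    rw [hQ, hP, eval_prod, eval_prod]
    simp only [eval_sub, eval_X, eval_C]
    rw [show ((-1 : ℝ) ^ (k + 1)) = ∏ _j : Fin (k + 1), (-1 : ℝ) by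
      rw [Finset.prod_const, Finset.card_univ, Fintype.card_fin],
      ← Finset.prod_mul_distrib]
    exact Finset.prod_congr rfl fun j _ => by simp [hx']; ring
  -- relate derivatives
  have hQder : ∀ z : ℝ, (derivative Q).eval z
      = (-1 : ℝ) ^ (k + 1) * ((derivative P).eval (-z) * (-1)) := by
    intro z
    have h1 : HasDerivAt (fun w : ℝ => P.eval (-w)) ((derivative P).eval (-z) * (-1)) z :=
      HasDerivAt.comp z (P.hasDerivAt (-z)) (hasDerivAt_neg z)
    have h2 := h1.const_mul ((-1 : ℝ) ^ (k + 1))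
    have heq : (fun w : ℝ => Q.eval w) = fun w : ℝ => (-1 : ℝ) ^ (k + 1) * P.eval (-w) := by
      funext w; exact hQeval w
    have h3 : HasDerivAt (fun w : ℝ => Q.eval w)
        ((-1 : ℝ) ^ (k + 1) * ((derivative P).eval (-z) * (-1))) z := by
      rw [heq]; exact h2
    exact (Q.hasDerivAt z).unique h3
  have hcrit' : ∀ z : ℝ, (Polynomial.derivative Q).IsRoot z → -ε < z ∧ z < ε := by
    intro z hz
    have h0 : (derivative P).eval (-z) = 0 := by
      have := hz
      rw [IsRoot, hQder z] at this
      have hne : ((-1 : ℝ) ^ (k + 1)) ≠ 0 := by positivity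
      rcases mul_eq_zero.mp this with h | h
      · exact absurd h hne
      · rcases mul_eq_zero.mp h with h' | h'
        · exact h'
        · norm_num at h'
    have := hcrit (-z) h0
    constructor <;> linarith [this.1, this.2]
  have hj1' : ∀ j, x' j ≤ x' j1 := fun j => by simp [hx', hj1 j]
  have hj0' : ∀ j, x' j0 ≤ x' j := fun j => by simp [hx', hj0 j]
  have hB := key_aux k hk ε hε x' hinj' Q hQ hcrit' j1 j0 hj1' hj0'
  simp only [hx'] at hB
  -- conclude
  intro j
  have hpos : (0 : ℝ) < (k : ℝ) ^ 2 - 1 := by nlinarith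
  have hc : (0 : ℝ) < (((k : ℝ) + 1) * (2 * (k : ℝ) ^ 2 - 2 * (k : ℝ) - 2)) * ε := by
    apply mul_pos _ hε
    nlinarith
  rw [abs_lt]
  constructor
  · have h1 : ((k : ℝ) ^ 2 - 1) * (-(x j1)) ≤ ((k : ℝ) + 1) ^ 2 * ε := by nlinarith
    nlinarith [hj1 j]
  · have h1 : ((k : ℝ) ^ 2 - 1) * x j0 ≤ ((k : ℝ) + 1) ^ 2 * ε := by nlinarith
    nlinarith [hj0 j]
end
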